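/- With notation as above, if λ ≠ 0 then the pre-Lie morphism φ: g_CK^J → g_FdB is surjective if and only if 1 ∈ J and (2 ∈ J or μ ≠ λ). -/

import Mathlib

/-- Rooted trees with vertices decorated by `D` (a root decoration and a list of subtrees). -/
inductive RT (D : Type*) : Type _
  | node : D → List (RT D) → RT D

namespace RT

variable {D : Type*}

mutual
  /-- The degree of a decorated rooted tree: the sum of the (positive integer) degrees of
  the decorations of its vertices. -/
  def degN (w : D → ℕ+) : RT D → ℕ
    | .node j c => (w j : ℕ) + degListN w c
  /-- Sum of degrees of a list of trees. -/
  def degListN (w : D → ℕ+) : List (RT D) → ℕ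
    | [] => 0
    | t :: ts => degN w t + degListN w ts
end

theorem degN_pos (w : D → ℕ+) : ∀ t : RT D, 0 < degN w t
  | .node j c => by
      rw [degN]
      exact Nat.lt_of_lt_of_le (w j).2 (Nat.le_add_right _ _)

/-- The degree of a decorated rooted tree, as a positive integer. -/
def deg (w : D → ℕ+) (t : RT D) : ℕ+ := ⟨degN w t, degN_pos w t⟩

mutual
  /-- The list of all graftings of the tree `t` on the vertices of the tree `s`. -/
  def graftings (t : RT D) : RT D → List (RT D)
    | .node j c => RT.node j (t :: c) :: (graftingsList t c).map fun c' => RT.node j c'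
  /-- All ways to graft `t` on a vertex of one of the trees of a list (forest). -/
  def graftingsList (t : RT D) : List (RT D) → List (List (RT D))
    | [] => []
    | s :: rest => ((graftings t s).map fun s' => s' :: rest) ++
        ((graftingsList t rest).map fun rest' => s :: rest')
end

end RT

/-- The pre-Lie product of the free pre-Lie algebra `g_CK^J` on rooted trees decorated by `J`
(`t ∘ t' = Σ` of all graftings of `t` on the vertices of `t'`), extended bilinearly to the span
of trees. -/
noncomputable def gprod {D : Type*} (K : Type*) [Field K] (x y : RT D →₀ K) : RT D →₀ K :=
  x.sum fun t a => y.sum fun s b =>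
    (a * b) • ((RT.graftings t s).map fun u => Finsupp.single u (1 : K)).sum

/-- The Faà di Bruno pre-Lie algebra: basis `(e_i)_{i≥1}`, product
`e_i ∘ e_j = (λ j − μ) e_{i+j}`. -/
noncomputable def fdbMul (K : Type*) [Field K] (lam mu : K) (x y : ℕ+ →₀ K) : ℕ+ →₀ K :=
  x.sum fun i a => y.sum fun j b => Finsupp.single (i + j) (a * b * (lam * ((j : ℕ) : K) - mu))

/-!
Every tree `t` is sent to a multiple of `e_|t|`, by induction on the degree and then on the number
of children of the root: for `t = node j (t₁ :: c)` the grafting identity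
`t = t₁ ∘ node j c − Σ node j c'`, over the graftings `c'` of `t₁` onto the trees of `c`, expresses
`t` through trees of smaller degree and trees of the same degree with one child fewer at the root.

Hence `e_1 ∉ Im φ` unless `1 ∈ J`, and the only degree-2 tree other than `•_2` is `•_1 ∘ •_1`,
sent to `(λ − μ) e_2`. Conversely, `e_{n+2}` is both `e_1 ∘ e_{n+1}` and `e_2 ∘ e_n` up to the
scalars `λ(n+1) − μ` and `λn − μ`, which cannot both vanish when `λ ≠ 0`; so `e_1` and `e_2`
generate everything.
-/

namespace RT

variable {D : Type*} (w : D → ℕ+)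

mutual

theorem degN_of_mem_graftings (t : RT D) : ∀ s : RT D, ∀ u ∈ graftings t s,
    degN w u = degN w t + degN w s
  | .node j c, u, hu => by
    rcases List.mem_cons.1 hu with rfl | hu
    · simp only [degN, degListN]; ring
    · obtain ⟨c', hc', rfl⟩ := List.mem_map.1 hu
      simp only [degN, degListN_of_mem_graftingsList t c c' hc']; ring

theorem degListN_of_mem_graftingsList (t : RT D) : ∀ l : List (RT D), ∀ l' ∈ graftingsList t l,
    degListN w l' = degN w t + degListN w l
  | [], _, h => by simp [graftingsList] at h
  | s :: rest, l', h => by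
    rcases List.mem_append.1 h with h | h
    · obtain ⟨s', hs', rfl⟩ := List.mem_map.1 h
      simp only [degListN, degN_of_mem_graftings t s s' hs']; ring
    · obtain ⟨r', hr', rfl⟩ := List.mem_map.1 h
      simp only [degListN, degListN_of_mem_graftingsList t rest r' hr']; ring

end

theorem length_of_mem_graftingsList (t : RT D) : ∀ l : List (RT D), ∀ l' ∈ graftingsList t l,
    l'.length = l.length
  | [], _, h => by simp [graftingsList] at h
  | s :: rest, l', h => by
    rcases List.mem_append.1 h with h | h
    · obtain ⟨s', _, rfl⟩ := List.mem_map.1 h; simp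
    · obtain ⟨r', hr', rfl⟩ := List.mem_map.1 h
      simp [length_of_mem_graftingsList t rest r' hr']

theorem degListN_eq_zero_iff {l : List (RT D)} : degListN w l = 0 ↔ l = [] := by
  cases l with
  | nil => simp [degListN]
  | cons t ts => simp [degListN, (degN_pos w t).ne']

theorem degN_eq_one_iff {t : RT D} : degN w t = 1 ↔ ∃ j, t = node j [] ∧ w j = 1 := by
  obtain ⟨j, l⟩ := t
  have hj := (w j).pos
  rw [degN]
  constructor
  · intro h
    refine ⟨j, ?_, PNat.coe_eq_one_iff.1 (by omega)⟩
    rw [(degListN_eq_zero_iff w (l := l)).1 (by omega)]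
  · rintro ⟨j, h, hj⟩
    obtain ⟨rfl, rfl⟩ := node.inj h
    simp [degListN, hj]

theorem degListN_eq_one_iff {l : List (RT D)} :
    degListN w l = 1 ↔ ∃ j, l = [node j []] ∧ w j = 1 := by
  cases l with
  | nil => simp [degListN]
  | cons t ts =>
    have ht := degN_pos w t
    rw [degListN]
    constructor
    · intro h
      obtain ⟨j, rfl, hj⟩ := (degN_eq_one_iff w (t := t)).1 (by omega)
      exact ⟨j, by rw [(degListN_eq_zero_iff w (l := ts)).1 (by omega)], hj⟩
    · rintro ⟨j, h, hj⟩
      simp only [List.cons.injEq] at h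
      obtain ⟨rfl, rfl⟩ := h
      simp [degN, degListN, hj]

theorem degN_eq_two_iff {t : RT D} : degN w t = 2 ↔
    (∃ j, t = node j [] ∧ w j = 2) ∨ ∃ j j', t = node j [node j' []] ∧ w j = 1 ∧ w j' = 1 := by
  obtain ⟨j, l⟩ := t
  have hj := (w j).pos
  rw [degN]
  constructor
  · intro h
    rcases (by omega : degListN w l = 0 ∨ degListN w l = 1 ∧ (w j : ℕ) = 1) with h0 | ⟨h1, hj1⟩
    · refine Or.inl ⟨j, ?_, PNat.coe_inj.1 (by rw [PNat.val_ofNat]; omega)⟩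
      rw [(degListN_eq_zero_iff w).1 h0]
    · obtain ⟨j', rfl, hj'⟩ := (degListN_eq_one_iff w).1 h1
      exact Or.inr ⟨j, j', rfl, PNat.coe_eq_one_iff.1 hj1, hj'⟩
  · rintro (⟨j, h, hj⟩ | ⟨j, j', h, hj, hj'⟩) <;> obtain ⟨rfl, rfl⟩ := node.inj h
    · simp [degListN, hj]
    · simp [degN, degListN, hj, hj']

end RT

section Products

variable {D K : Type*} [Field K]

theorem gprod_single_single (t s : RT D) :
    gprod K (Finsupp.single t 1) (Finsupp.single s 1) =
      ((RT.graftings t s).map fun u => Finsupp.single u (1 : K)).sum := by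
  rw [gprod, Finsupp.sum_single_index, Finsupp.sum_single_index] <;> simp

theorem single_node_cons_eq (t : RT D) (j : D) (c : List (RT D)) :
    Finsupp.single (RT.node j (t :: c)) (1 : K) =
      gprod K (Finsupp.single t 1) (Finsupp.single (RT.node j c) 1) -
        ((RT.graftingsList t c).map fun c' => Finsupp.single (RT.node j c') (1 : K)).sum := by
  rw [gprod_single_single, RT.graftings, List.map_cons, List.sum_cons, List.map_map]
  exact (add_sub_cancel_right _ _).symm

theorem single_node_singleton_eq_gprod (t : RT D) (j : D) :
    Finsupp.single (RT.node j [t]) (1 : K) =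
      gprod K (Finsupp.single t 1) (Finsupp.single (RT.node j []) 1) := by
  simp [gprod_single_single, RT.graftings, RT.graftingsList]

variable (lam mu : K)

theorem fdbMul_single_single (m n : ℕ+) (a b : K) :
    fdbMul K lam mu (Finsupp.single m a) (Finsupp.single n b) =
      Finsupp.single (m + n) (a * b * (lam * ((n : ℕ) : K) - mu)) := by
  rw [fdbMul, Finsupp.sum_single_index, Finsupp.sum_single_index] <;> simp

theorem fdbMul_mem_span_single {m n : ℕ+} {x y : ℕ+ →₀ K}
    (hx : x ∈ K ∙ Finsupp.single m 1) (hy : y ∈ K ∙ Finsupp.single n 1) :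
    fdbMul K lam mu x y ∈ K ∙ Finsupp.single (m + n) 1 := by
  obtain ⟨a, rfl⟩ := Submodule.mem_span_singleton.1 hx
  obtain ⟨b, rfl⟩ := Submodule.mem_span_singleton.1 hy
  simp only [Finsupp.smul_single_one, fdbMul_single_single]
  exact Submodule.mem_span_singleton.2 ⟨_, Finsupp.smul_single_one _ _⟩

end Products

section Homogeneity

variable {D K : Type*} [Field K] {lam mu : K} (w : D → ℕ+) {φ : (RT D →₀ K) →ₗ[K] (ℕ+ →₀ K)}

theorem map_single_node_mem_span_single
    (hgen : ∀ j, φ (Finsupp.single (RT.node j []) 1) = Finsupp.single (w j) 1)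
    (hmor : ∀ x y, φ (gprod K x y) = fdbMul K lam mu (φ x) (φ y)) (j : D) (l : List (RT D)) :
    φ (Finsupp.single (RT.node j l) 1) ∈ K ∙ Finsupp.single (RT.deg w (RT.node j l)) 1 := by
  match l with
  | [] =>
    rw [hgen]
    convert Submodule.mem_span_singleton_self _
    exact PNat.eq (by simp [RT.deg, RT.degN, RT.degListN])
  | .node j' l' :: c =>
    have hdeg :
        RT.deg w (.node j' l') + RT.deg w (.node j c) = RT.deg w (.node j (.node j' l' :: c)) :=
      PNat.eq (by rw [PNat.add_coe]; simp only [RT.deg, PNat.mk_coe, RT.degN, RT.degListN]; ring)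
    rw [single_node_cons_eq, map_sub, hmor, map_list_sum, List.map_map]
    refine sub_mem (hdeg ▸ fdbMul_mem_span_single lam mu
      (map_single_node_mem_span_single hgen hmor j' l')
      (map_single_node_mem_span_single hgen hmor j c)) (list_sum_mem ?_)
    simp only [List.mem_map, Function.comp_apply]
    rintro _ ⟨c', hc', rfl⟩
    have hdeg' : RT.deg w (.node j c') = RT.deg w (.node j (.node j' l' :: c)) :=
      PNat.eq (by
        simp only [RT.deg, PNat.mk_coe, RT.degN, RT.degListN,
          RT.degListN_of_mem_graftingsList w _ c c' hc'])
    exact hdeg' ▸ map_single_node_mem_span_single hgen hmor j c'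
termination_by (RT.degN w (.node j l), l.length)
decreasing_by
  all_goals simp only [Prod.lex_def, RT.degN, RT.degListN, List.length_cons]
  · have := (w j).pos
    omega
  · have := (w j').pos
    omega
  · simp [RT.degListN_of_mem_graftingsList w _ c c' hc', RT.degN,
      RT.length_of_mem_graftingsList _ c c' hc']

theorem map_single_mem_span_single
    (hgen : ∀ j, φ (Finsupp.single (RT.node j []) 1) = Finsupp.single (w j) 1)
    (hmor : ∀ x y, φ (gprod K x y) = fdbMul K lam mu (φ x) (φ y)) :
    ∀ t : RT D, φ (Finsupp.single t 1) ∈ K ∙ Finsupp.single (RT.deg w t) 1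
  | .node j l => map_single_node_mem_span_single w hgen hmor j l

end Homogeneity

theorem apply_eq_zero_of_mem_span_single {α K : Type*} [Field K] {n p : α} {x : α →₀ K}
    (hx : x ∈ K ∙ Finsupp.single n 1) (hp : p ≠ n) : x p = 0 := by
  obtain ⟨a, rfl⟩ := Submodule.mem_span_singleton.1 hx
  simp [Finsupp.single_eq_of_ne hp]

theorem not_surjective_of_forall_apply_single_eq_zero {α β K : Type*} [Field K]
    {φ : (α →₀ K) →ₗ[K] (β →₀ K)} {p : β} (h : ∀ t, φ (Finsupp.single t 1) p = 0) :
    ¬ Function.Surjective φ := by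
  intro hφ
  obtain ⟨x, hx⟩ := hφ (Finsupp.single p 1)
  have hzero : (Finsupp.lapply p).comp φ = 0 :=
    Finsupp.lhom_ext fun t b => by
      rw [LinearMap.comp_apply, ← Finsupp.smul_single_one, map_smul]
      simp [h]
  simpa [hx] using LinearMap.congr_fun hzero x

section Surjectivity

variable {K : Type*} [Field K] {lam mu : K} {J : Set ℕ+} {φ : (RT J →₀ K) →ₗ[K] (ℕ+ →₀ K)}

theorem one_mem_of_surjective
    (hgen : ∀ j : J, φ (Finsupp.single (RT.node j []) 1) = Finsupp.single (j : ℕ+) 1)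
    (hmor : ∀ x y : RT J →₀ K, φ (gprod K x y) = fdbMul K lam mu (φ x) (φ y))
    (hφ : Function.Surjective φ) : (1 : ℕ+) ∈ J := by
  by_contra h1
  refine not_surjective_of_forall_apply_single_eq_zero (p := 1) (fun t => ?_) hφ
  refine apply_eq_zero_of_mem_span_single (map_single_mem_span_single _ hgen hmor t) fun h => ?_
  obtain ⟨j, -, hj⟩ := (RT.degN_eq_one_iff _).1 (congrArg PNat.val h.symm)
  exact h1 (hj ▸ j.2)

theorem two_mem_or_ne_of_surjective
    (hgen : ∀ j : J, φ (Finsupp.single (RT.node j []) 1) = Finsupp.single (j : ℕ+) 1)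
    (hmor : ∀ x y : RT J →₀ K, φ (gprod K x y) = fdbMul K lam mu (φ x) (φ y))
    (hφ : Function.Surjective φ) : (2 : ℕ+) ∈ J ∨ mu ≠ lam := by
  by_contra! h
  obtain ⟨h2, rfl⟩ := h
  refine not_surjective_of_forall_apply_single_eq_zero (p := 2) (fun t => ?_) hφ
  by_cases ht : RT.deg Subtype.val t = 2
  · rcases (RT.degN_eq_two_iff _).1 (congrArg PNat.val ht) with
      ⟨j, -, hj⟩ | ⟨j, j', rfl, hj, hj'⟩
    · exact absurd (hj ▸ j.2) h2
    · obtain rfl : j = j' := Subtype.ext (hj.trans hj'.symm)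
      rw [single_node_singleton_eq_gprod, hmor, hgen, fdbMul_single_single, hj]
      simp
  · exact apply_eq_zero_of_mem_span_single (map_single_mem_span_single _ hgen hmor t) (Ne.symm ht)

end Surjectivity

section Generation

variable {K : Type*} [Field K] {lam mu : K} {V : Submodule K (ℕ+ →₀ K)}

theorem single_add_mem_of_fdbMul_mem (hV : ∀ x ∈ V, ∀ y ∈ V, fdbMul K lam mu x y ∈ V)
    {m n : ℕ+} (hm : Finsupp.single m 1 ∈ V) (hn : Finsupp.single n 1 ∈ V)
    (hc : lam * ((n : ℕ) : K) - mu ≠ 0) : Finsupp.single (m + n) 1 ∈ V := by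
  have h := hV _ hm _ hn
  rw [fdbMul_single_single, one_mul, one_mul, ← Finsupp.smul_single_one] at h
  exact (V.smul_mem_iff hc).1 h

theorem eq_top_of_fdbMul_mem (hlam : lam ≠ 0) (hV : ∀ x ∈ V, ∀ y ∈ V, fdbMul K lam mu x y ∈ V)
    (h1 : Finsupp.single 1 1 ∈ V) (h2 : Finsupp.single 2 1 ∈ V) : V = ⊤ := by
  have hall : ∀ k : ℕ, Finsupp.single k.succPNat 1 ∈ V := by
    intro k
    induction k using Nat.twoStepInduction with
    | zero => exact h1
    | one => exact h2
    | more k hk hk1 =>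
      by_cases hc : lam * (((k + 1).succPNat : ℕ) : K) - mu = 0
      · convert single_add_mem_of_fdbMul_mem hV h2 hk ?_ using 2
        · exact PNat.eq (by simp only [Nat.succPNat_coe, PNat.add_coe, PNat.val_ofNat]; omega)
        · intro h
          apply hlam
          simp only [Nat.succPNat_coe, Nat.succ_eq_add_one, Nat.cast_add, Nat.cast_one] at hc h
          linear_combination hc - h
      · convert single_add_mem_of_fdbMul_mem hV h1 hk1 hc using 2
        exact PNat.eq (by simp only [Nat.succPNat_coe, PNat.add_coe, PNat.val_ofNat]; omega)
  rw [eq_top_iff, ← (Finsupp.basisSingleOne (R := K) (ι := ℕ+)).span_eq, Submodule.span_le]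
  rintro _ ⟨n, rfl⟩
  simpa using hall n.natPred

end Generation

/-- With `λ ≠ 0`, the pre-Lie morphism `φ : g_CK^J → g_FdB` (the unique one with
`φ(•_j) = e_j`, where `e_i ∘ e_j = (λj−μ) e_{i+j}`) is surjective if and only if
`1 ∈ J` and (`2 ∈ J` or `μ ≠ λ`). -/
theorem phi_surjective_iff_of_lam_ne_zero (K : Type*) [Field K] [CharZero K] (lam mu : K)
    (hlam : lam ≠ 0) (J : Set ℕ+)
    (φ : (RT J →₀ K) →ₗ[K] (ℕ+ →₀ K))
    (hgen : ∀ j : J, φ (Finsupp.single (RT.node j []) 1) = Finsupp.single (j : ℕ+) 1)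
    (hmor : ∀ x y : RT J →₀ K, φ (gprod K x y) = fdbMul K lam mu (φ x) (φ y)) :
    Function.Surjective φ ↔ ((1 : ℕ+) ∈ J ∧ ((2 : ℕ+) ∈ J ∨ mu ≠ lam)) := by
  refine ⟨fun hφ => ⟨one_mem_of_surjective hgen hmor hφ, two_mem_or_ne_of_surjective hgen hmor hφ⟩,
    fun ⟨h1, h2⟩ => ?_⟩
  have hV : ∀ x ∈ LinearMap.range φ, ∀ y ∈ LinearMap.range φ,
      fdbMul K lam mu x y ∈ LinearMap.range φ := by
    rintro _ ⟨x, rfl⟩ _ ⟨y, rfl⟩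
    exact ⟨gprod K x y, hmor x y⟩
  have he1 : Finsupp.single 1 1 ∈ LinearMap.range φ := ⟨_, hgen ⟨1, h1⟩⟩
  have he2 : Finsupp.single 2 1 ∈ LinearMap.range φ := by
    rcases h2 with h2 | h2
    · exact ⟨_, hgen ⟨2, h2⟩⟩
    · exact single_add_mem_of_fdbMul_mem hV he1 he1 (by simpa [sub_eq_zero] using h2.symm)
  exact LinearMap.range_eq_top.1 (eq_top_of_fdbMul_mem hlam hV he1 he2)
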